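/- arXiv:2406.18339 — 2 statements merged into one kernel-verified Lean document; each statement's English description precedes it below -/
import Mathlib

section
/- Let Ω be a measure space with finite total measure |Ω| > 0, let M₁, M₂ > 0, and let A, B, C ∈ L²(Ω) be nonnegative functions satisfying the conservation relations (1/|Ω|)∫_Ω A² + (1/|Ω|)∫_Ω C² = M₁ and (1/|Ω|)∫_Ω B² + (1/|Ω|)∫_Ω C² = M₂. Set ε := (M₁/2)·|Ω|/(|Ω| + 2 + 2·M₂·|Ω|). If ∫_Ω (A − Ā)² ≤ ε, ∫_Ω (C − C̄)² ≤ ε, and Ā < √ε, then ∫_Ω (Ā·B − C̄)² ≥ M₁·|Ω|/4 ≥ (M₁/(4·M₂))·∫_Ω (B − B̄)². -/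
/-!
Write `V = |Ω|` and `a, b, c` for the averages of `A, B, C`. The parallel axis identity
`∫ (f - m)² = ∫ (f - f̄)² + V (f̄ - m)²` turns the hypotheses into bounds on the averages:
`a² ≤ ε`, `b² ≤ M₂` and `V c² ≥ M₁ V - ε (V + 2)`. Then
`∫ (a B - c)² ≥ V (a b - c)² ≥ V (c²/2 - a² b²) ≥ (M₁ V - ε (V + 2)) / 2 - ε M₂ V`,
and `ε` is chosen exactly so that the right-hand side is `M₁ V / 4`.
The second inequality is `∫ (B - b)² ≤ ∫ B² ≤ M₂ V`.
-/

open MeasureTheory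

section ParallelAxis

variable {α : Type*} [MeasurableSpace α] {μ : Measure α}

theorem average_const_mul (r : ℝ) (f : α → ℝ) : ⨍ x, r * f x ∂μ = r * ⨍ x, f x ∂μ := by
  simp only [average_eq, integral_const_mul, smul_eq_mul, mul_left_comm]

variable [IsFiniteMeasure μ]

theorem integral_sub_sq_eq_integral_sub_average_sq_add {f : α → ℝ} (hf : MemLp f 2 μ) (m : ℝ) :
    ∫ x, (f x - m) ^ 2 ∂μ =
      ∫ x, (f x - ⨍ y, f y ∂μ) ^ 2 ∂μ + μ.real Set.univ * (⨍ y, f y ∂μ - m) ^ 2 := by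
  set a := ⨍ y, f y ∂μ
  have hsq : Integrable (fun x => (f x - a) ^ 2) μ := (hf.sub (memLp_const a)).integrable_sq
  have hlin : Integrable (fun x => 2 * (a - m) * (f x - a)) μ :=
    ((hf.integrable one_le_two).sub (integrable_const a)).const_mul _
  calc ∫ x, (f x - m) ^ 2 ∂μ
      = ∫ x, ((f x - a) ^ 2 + 2 * (a - m) * (f x - a) + (a - m) ^ 2) ∂μ := by
        congr 1; ext x; ring
    _ = ∫ x, (f x - a) ^ 2 ∂μ + μ.real Set.univ * (a - m) ^ 2 := by
        rw [integral_add (hsq.fun_add hlin) (integrable_const _), integral_add hsq hlin,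
          integral_const_mul, integral_sub_average, integral_const, smul_eq_mul]
        ring

theorem integral_sq_eq_integral_sub_average_sq_add {f : α → ℝ} (hf : MemLp f 2 μ) :
    ∫ x, f x ^ 2 ∂μ = ∫ x, (f x - ⨍ y, f y ∂μ) ^ 2 ∂μ + μ.real Set.univ * (⨍ y, f y ∂μ) ^ 2 := by
  simpa using integral_sub_sq_eq_integral_sub_average_sq_add hf 0

theorem measureReal_univ_mul_sq_average_sub_le {f : α → ℝ} (hf : MemLp f 2 μ) (m : ℝ) :
    μ.real Set.univ * (⨍ y, f y ∂μ - m) ^ 2 ≤ ∫ x, (f x - m) ^ 2 ∂μ := by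
  rw [integral_sub_sq_eq_integral_sub_average_sq_add hf m]
  exact le_add_of_nonneg_left (integral_nonneg fun x => sq_nonneg _)

end ParallelAxis

theorem mass_div_four_le_mul_sq_mul_sub {V M₁ M₂ ε a b c : ℝ} (hV : 0 ≤ V)
    (ha : a ^ 2 ≤ ε) (hb : b ^ 2 ≤ M₂) (hc : M₁ * V - ε * (V + 2) ≤ V * c ^ 2)
    (hε : ε * (V + 2 + 2 * M₂ * V) = M₁ * V / 2) :
    M₁ * V / 4 ≤ V * (a * b - c) ^ 2 := by
  have hab : (a * b) ^ 2 ≤ ε * M₂ := by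
    rw [mul_pow]; exact mul_le_mul ha hb (sq_nonneg b) ((sq_nonneg a).trans ha)
  calc M₁ * V / 4 = (M₁ * V - ε * (V + 2)) / 2 - V * (ε * M₂) := by
        linear_combination (1 / 2) * hε
    _ ≤ V * (c ^ 2 / 2 - (a * b) ^ 2) := by linarith [mul_le_mul_of_nonneg_left hab hV]
    _ ≤ V * (a * b - c) ^ 2 := by
        gcongr; linarith [add_sq_le (a := a * b) (b := c - a * b)]

theorem stmt_7_general {Ω : Type*} [MeasurableSpace Ω] (μ : Measure Ω) [IsFiniteMeasure μ]
    (hμ : 0 < μ Set.univ) (M₁ M₂ : ℝ) (hM₁ : 0 < M₁) (hM₂ : 0 < M₂)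
    (A B C : Ω → ℝ) (hA : MemLp A 2 μ) (hB : MemLp B 2 μ) (hC : MemLp C 2 μ)
    (hA0 : ∀ x, 0 ≤ A x)
    (hcons₁ : (⨍ y, (A y)^2 ∂μ) + (⨍ y, (C y)^2 ∂μ) = M₁)
    (hcons₂ : (⨍ y, (B y)^2 ∂μ) + (⨍ y, (C y)^2 ∂μ) = M₂)
    (ε : ℝ)
    (hε : ε = (M₁/2) * (μ Set.univ).toReal /
      ((μ Set.univ).toReal + 2 + 2 * M₂ * (μ Set.univ).toReal))
    (hδA : (∫ x, (A x - ⨍ y, A y ∂μ)^2 ∂μ) ≤ ε)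
    (hδC : (∫ x, (C x - ⨍ y, C y ∂μ)^2 ∂μ) ≤ ε)
    (hAbar : (⨍ y, A y ∂μ) < Real.sqrt ε) :
    (∫ x, ((⨍ y, A y ∂μ) * B x - ⨍ y, C y ∂μ)^2 ∂μ) ≥ M₁ * (μ Set.univ).toReal / 4
      ∧ M₁ * (μ Set.univ).toReal / 4 ≥ (M₁ / (4 * M₂)) * ∫ x, (B x - ⨍ y, B y ∂μ)^2 ∂μ := by
  rw [← measureReal_def] at hε ⊢
  set V := μ.real Set.univ
  set a := ⨍ y, A y ∂μ
  set b := ⨍ y, B y ∂μ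
  set c := ⨍ y, C y ∂μ
  have hV : 0 < V := ENNReal.toReal_pos hμ.ne' (measure_ne_top μ _)
  have hint (g : Ω → ℝ) : ∫ x, g x ∂μ = V * ⨍ x, g x ∂μ := (measure_smul_average μ g).symm
  have hmass₁ : ∫ x, A x ^ 2 ∂μ + ∫ x, C x ^ 2 ∂μ = M₁ * V := by
    rw [hint, hint, ← mul_add, hcons₁, mul_comm]
  have hmass₂ : ∫ x, B x ^ 2 ∂μ + ∫ x, C x ^ 2 ∂μ = M₂ * V := by
    rw [hint, hint, ← mul_add, hcons₂, mul_comm]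
  have hA2 := integral_sq_eq_integral_sub_average_sq_add hA
  have hB2 := integral_sq_eq_integral_sub_average_sq_add hB
  have hC2 := integral_sq_eq_integral_sub_average_sq_add hC
  have hC2_nonneg : 0 ≤ ∫ x, C x ^ 2 ∂μ := integral_nonneg fun x => sq_nonneg _
  have hBvar_nonneg : 0 ≤ ∫ x, (B x - b) ^ 2 ∂μ := integral_nonneg fun x => sq_nonneg _
  have hεV : ε * (V + 2 + 2 * M₂ * V) = M₁ * V / 2 := by rw [hε]; field_simp
  have ha : a ^ 2 ≤ ε := ((Real.lt_sqrt (integral_nonneg hA0)).1 hAbar).le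
  have hb : b ^ 2 ≤ M₂ := le_of_mul_le_mul_left (by linarith) hV
  have hc : M₁ * V - ε * (V + 2) ≤ V * c ^ 2 := by
    linarith [mul_le_mul_of_nonneg_left ha hV.le]
  constructor
  · calc ∫ x, (a * B x - c) ^ 2 ∂μ ≥ V * (a * b - c) ^ 2 :=
          average_const_mul (μ := μ) a B ▸
            measureReal_univ_mul_sq_average_sub_le (hB.const_mul a) c
      _ ≥ M₁ * V / 4 := mass_div_four_le_mul_sq_mul_sub hV.le ha hb hc hεV
  · have hBvar : ∫ x, (B x - b) ^ 2 ∂μ ≤ M₂ * V := by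
      linarith [mul_nonneg hV.le (sq_nonneg b)]
    calc M₁ / (4 * M₂) * ∫ x, (B x - b) ^ 2 ∂μ ≤ M₁ / (4 * M₂) * (M₂ * V) := by gcongr
      _ = M₁ * V / 4 := by field_simp

theorem stmt_7 {Ω : Type*} [MeasurableSpace Ω] (μ : Measure Ω) [IsFiniteMeasure μ]
    (hμ : 0 < μ Set.univ) (M₁ M₂ : ℝ) (hM₁ : 0 < M₁) (hM₂ : 0 < M₂)
    (A B C : Ω → ℝ) (hA : MemLp A 2 μ) (hB : MemLp B 2 μ) (hC : MemLp C 2 μ)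
    (hA0 : ∀ x, 0 ≤ A x) (hB0 : ∀ x, 0 ≤ B x) (hC0 : ∀ x, 0 ≤ C x)
    (hcons₁ : (⨍ y, (A y)^2 ∂μ) + (⨍ y, (C y)^2 ∂μ) = M₁)
    (hcons₂ : (⨍ y, (B y)^2 ∂μ) + (⨍ y, (C y)^2 ∂μ) = M₂)
    (ε : ℝ)
    (hε : ε = (M₁/2) * (μ Set.univ).toReal /
      ((μ Set.univ).toReal + 2 + 2 * M₂ * (μ Set.univ).toReal))
    (hδA : (∫ x, (A x - ⨍ y, A y ∂μ)^2 ∂μ) ≤ ε)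
    (hδC : (∫ x, (C x - ⨍ y, C y ∂μ)^2 ∂μ) ≤ ε)
    (hAbar : (⨍ y, A y ∂μ) < Real.sqrt ε) :
    (∫ x, ((⨍ y, A y ∂μ) * B x - ⨍ y, C y ∂μ)^2 ∂μ) ≥ M₁ * (μ Set.univ).toReal / 4
      ∧ M₁ * (μ Set.univ).toReal / 4 ≥ (M₁ / (4 * M₂)) * ∫ x, (B x - ⨍ y, B y ∂μ)^2 ∂μ :=
  stmt_7_general μ hμ M₁ M₂ hM₁ hM₂ A B C hA hB hC hA0 hcons₁ hcons₂ ε hε hδA hδC hAbar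
end

section
/- There exists a constant C > 0 such that for all real numbers x, y > 0, x·ln(x/y) − x + y ≤ C · max{1, ln(x/y)} · (√x − √y)². -/
theorem stmt_11 :
    ∃ C : ℝ, 0 < C ∧ ∀ x y : ℝ, 0 < x → 0 < y →
      x * Real.log (x / y) - x + y
        ≤ C * max 1 (Real.log (x / y)) * (Real.sqrt x - Real.sqrt y)^2 := by
  refine ⟨32, by norm_num, fun x y hx hy => ?_⟩
  set L := Real.log (x / y) with hLdef
  have hxy : 0 < x / y := div_pos hx hy
  set a := Real.sqrt x with hadef
  set b := Real.sqrt y with hbdef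
  have ha : 0 < a := Real.sqrt_pos.mpr hx
  have hb : 0 < b := Real.sqrt_pos.mpr hy
  have ha2 : a ^ 2 = x := Real.sq_sqrt hx.le
  have hb2 : b ^ 2 = y := Real.sq_sqrt hy.le
  rcases le_total L 1 with h1 | h1
  · rw [max_eq_left h1]
    -- From log(x/y) ≤ 1 we get x ≤ 3y.
    have hx3 : x ≤ 3 * y := by
      have h := (Real.log_le_iff_le_exp hxy).mp h1
      have he : Real.exp 1 < 3 := by
        have := Real.exp_one_lt_d9
        linarith
      have : x / y ≤ 3 := le_of_lt (lt_of_le_of_lt h he)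
      calc x = (x / y) * y := by field_simp
        _ ≤ 3 * y := by nlinarith
    have hab : a ≤ 2 * b := by nlinarith [sq_nonneg (a - 2*b), sq_nonneg (a + 2*b)]
    -- log(x/y) ≤ x/y - 1
    have hlog : L ≤ x / y - 1 := Real.log_le_sub_one_of_pos hxy
    have hyL : y * L ≤ x - y := by
      have := mul_le_mul_of_nonneg_left hlog hy.le
      calc y * L ≤ y * (x / y - 1) := this
        _ = x - y := by field_simp
    have hxL : x * L ≤ x * (x / y - 1) := mul_le_mul_of_nonneg_left hlog hx.le
    have hxL' : x * L ≤ x * x / y - x := by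
      calc x * L ≤ x * (x / y - 1) := hxL
        _ = x * x / y - x := by field_simp
    -- Suffices: x*x/y - 2x + y ≤ 32*(a-b)^2, i.e. (x-y)^2 ≤ 32*y*(a-b)^2
    have key : x * x / y - 2 * x + y ≤ 32 * (a - b) ^ 2 := by
      rw [div_sub' (ne_of_gt hy), div_add' _ _ _ (ne_of_gt hy),
        div_le_iff₀ hy]
      nlinarith [sq_nonneg (a - b), sq_nonneg (a + b), mul_pos ha hb,
        mul_nonneg (sq_nonneg (a - b)) (sq_nonneg b),
        mul_nonneg (mul_nonneg (sq_nonneg (a - b)) hb.le) hb.le]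
    linarith [hxL', key]
  · rw [max_eq_right h1]
    have hL0 : (0:ℝ) < L := lt_of_lt_of_le one_pos h1
    -- From 1 ≤ log(x/y) we get exp 1 ≤ x/y, so 9y ≤ 4x.
    have hx9 : 9 * y ≤ 4 * x := by
      have h := (Real.le_log_iff_exp_le hxy).mp h1
      have he : (9:ℝ)/4 < Real.exp 1 := by
        have := Real.exp_one_gt_d9
        linarith
      have : (9:ℝ)/4 ≤ x / y := le_of_lt (lt_of_lt_of_le he h)
      have := (div_le_div_iff₀ (by norm_num) hy).mp this
      linarith
    have hba : 3 * b ≤ 2 * a := by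
      nlinarith [sq_nonneg (2*a - 3*b), sq_nonneg (2*a + 3*b)]
    -- a - b ≥ a/3
    have hd : a / 3 ≤ a - b := by linarith
    have hd2 : (a / 3) ^ 2 ≤ (a - b) ^ 2 := by
      apply pow_le_pow_left₀ (by positivity) hd
    have hRHS : 32 * L * (a / 3) ^ 2 ≤ 32 * L * (a - b) ^ 2 :=
      mul_le_mul_of_nonneg_left hd2 (by positivity)
    have hyx : y ≤ x := by linarith
    -- LHS ≤ 2 x L ≤ (32/9) x L = 32 L (a/3)^2
    have : x * L - x + y ≤ 32 * L * (a / 3) ^ 2 := by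
      have hxL : x ≤ x * L := le_mul_of_one_le_right hx.le h1
      nlinarith [mul_le_mul_of_nonneg_right hyx (le_of_lt hL0)]
    linarith
end
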